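/- Let m >= 1 and r = e_m - e_{m+1} in A_m. If u_1,...,u_n are roots of A_m with (u_i, r) = 1 for all i, pairwise inequivalent under ~_r, and such that u_1,...,u_n, r generate A_m as a lattice, then n = m - 1. -/
import Mathlib


open Matrix

/-- The standard basis vector `e_k` of `ℝ^N`. -/
def e {N : ℕ} (k : Fin N) : Fin N → ℝ := fun j => if j = k then 1 else 0

/-- The root lattice `A_m`: integer vectors in `ℝ^{m+1}` with coordinate sum zero. -/
def Alat (m : ℕ) : Submodule ℤ (Fin (m + 1) → ℝ) where
  carrier := {v | (∀ i, ∃ z : ℤ, v i = (z : ℝ)) ∧ ∑ i, v i = 0}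
  add_mem' := by
    rintro a b ⟨ha1, ha2⟩ ⟨hb1, hb2⟩
    refine ⟨fun i => ?_, ?_⟩
    · obtain ⟨z, hz⟩ := ha1 i
      obtain ⟨w, hw⟩ := hb1 i
      exact ⟨z + w, by simp [hz, hw]⟩
    · simp only [Pi.add_apply, Finset.sum_add_distrib, ha2, hb2, add_zero]
  zero_mem' := ⟨fun i => ⟨0, by simp⟩, by simp⟩
  smul_mem' := by
    rintro c a ⟨ha1, ha2⟩
    refine ⟨fun i => ?_, ?_⟩
    · obtain ⟨z, hz⟩ := ha1 i
      exact ⟨c * z, by simp [hz, zsmul_eq_mul]⟩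
    · show ∑ i, (c • a) i = 0
      simp only [Pi.smul_apply, zsmul_eq_mul, ← Finset.mul_sum, ha2, mul_zero]

def IsRootOf {d : ℕ} (L : Submodule ℤ (Fin d → ℝ)) (v : Fin d → ℝ) : Prop :=
  v ∈ L ∧ v ⬝ᵥ v = 2


lemma root_struct {d : ℕ} (z : Fin d → ℤ) (h0 : ∑ i, z i = 0)
    (h2 : ∑ i, z i * z i = 2) :
    ∃ a b : Fin d, a ≠ b ∧
      ∀ k, z k = (if k = a then 1 else 0) - (if k = b then 1 else 0) := by
  classical
  have hle : ∀ i, z i * z i ≤ 2 := fun i => by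
    rw [← h2]
    exact Finset.single_le_sum (fun j _ => mul_self_nonneg (z j)) (Finset.mem_univ i)
  have hrange : ∀ i, z i = -1 ∨ z i = 0 ∨ z i = 1 := fun i => by
    have h := hle i
    have h1 : z i ≤ 1 := by nlinarith
    have h2' : -1 ≤ z i := by nlinarith
    omega
  have hPif : ∑ i, (z i * z i + z i) = ∑ i, (if z i = 1 then (2:ℤ) else 0) := by
    apply Finset.sum_congr rfl
    intro i _
    rcases hrange i with h | h | h <;> simp [h]
  have hNif : ∑ i, (z i * z i - z i) = ∑ i, (if z i = -1 then (2:ℤ) else 0) := by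
    apply Finset.sum_congr rfl
    intro i _
    rcases hrange i with h | h | h <;> simp [h]
  have hPsum : ∑ i, (if z i = 1 then (2:ℤ) else 0) = 2 := by
    rw [← hPif, Finset.sum_add_distrib, h0, h2]; ring
  have hNsum : ∑ i, (if z i = -1 then (2:ℤ) else 0) = 2 := by
    rw [← hNif, Finset.sum_sub_distrib, h0, h2]; ring
  have hPcard : (Finset.univ.filter (fun i => z i = 1)).card = 1 := by
    rw [← Finset.sum_filter, Finset.sum_const, nsmul_eq_mul] at hPsum
    omega
  have hNcard : (Finset.univ.filter (fun i => z i = -1)).card = 1 := by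
    rw [← Finset.sum_filter, Finset.sum_const, nsmul_eq_mul] at hNsum
    omega
  obtain ⟨a, ha⟩ := Finset.card_eq_one.mp hPcard
  obtain ⟨b, hb⟩ := Finset.card_eq_one.mp hNcard
  have hza : z a = 1 := by
    have : a ∈ Finset.univ.filter (fun i => z i = 1) := ha ▸ Finset.mem_singleton_self a
    exact (Finset.mem_filter.mp this).2
  have hzb : z b = -1 := by
    have : b ∈ Finset.univ.filter (fun i => z i = -1) := hb ▸ Finset.mem_singleton_self b
    exact (Finset.mem_filter.mp this).2
  refine ⟨a, b, fun h => by rw [h, hzb] at hza; omega, fun k => ?_⟩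
  by_cases hka : k = a
  · subst hka
    have : ¬ (k = b) := fun h => by rw [h, hzb] at hza; omega
    simp [this, hza]
  · by_cases hkb : k = b
    · subst hkb
      simp [hka, hzb]
    · have h1 : z k ≠ 1 := fun h => hka (Finset.mem_singleton.mp (ha ▸ Finset.mem_filter.mpr ⟨Finset.mem_univ k, h⟩))
      have h2' : z k ≠ -1 := fun h => hkb (Finset.mem_singleton.mp (hb ▸ Finset.mem_filter.mpr ⟨Finset.mem_univ k, h⟩))
      have : z k = 0 := by rcases hrange k with h|h|h <;> omega
      simp [hka, hkb, this]

/-- Let `r = e_m - e_{m+1}` in `A_m`. If `u_1, …, u_n` are roots of `A_m` with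
`(u_i, r) = 1`, pairwise inequivalent under `~_r` (i.e. `u_i ≠ u_j` and
`u_i ≠ r - u_j` for `i ≠ j`), and `u_1, …, u_n, r` generate `A_m` as a lattice,
then `n = m - 1`. -/
theorem stmt7 (m n : ℕ) (hm : 1 ≤ m) (r : Fin (m + 1) → ℝ)
    (hr : r = e ⟨m - 1, by omega⟩ - e ⟨m, by omega⟩)
    (u : Fin n → (Fin (m + 1) → ℝ))
    (hroot : ∀ i, IsRootOf (Alat m) (u i))
    (hinner : ∀ i, u i ⬝ᵥ r = 1)
    (hineq : ∀ i j, i ≠ j → u i ≠ u j ∧ u i ≠ r - u j)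
    (hspan : Submodule.span ℤ (insert r (Set.range u)) = Alat m) :
    n = m - 1 := by
  classical
  set p : Fin (m+1) := ⟨m - 1, by omega⟩ with hp
  set q : Fin (m+1) := ⟨m, by omega⟩ with hq
  have hpq : p ≠ q := by simp [hp, hq, Fin.ext_iff]; omega
  -- integer coordinates
  have hz : ∀ i, ∃ z : Fin (m+1) → ℤ, ∀ k, u i k = (z k : ℝ) := fun i => by
    choose zz hzz using (hroot i).1.1
    exact ⟨zz, hzz⟩
  choose z hzu using hz
  have hsum0 : ∀ i, ∑ k, z i k = 0 := fun i => by
    have h := (hroot i).1.2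
    have : ((∑ k, z i k : ℤ) : ℝ) = 0 := by
      push_cast
      rw [← h]
      exact Finset.sum_congr rfl (fun k _ => (hzu i k).symm)
    exact_mod_cast this
  have hsum2 : ∀ i, ∑ k, z i k * z i k = 2 := fun i => by
    have h := (hroot i).2
    have : ((∑ k, z i k * z i k : ℤ) : ℝ) = 2 := by
      push_cast
      rw [← h]
      exact Finset.sum_congr rfl (fun k _ => by rw [hzu i k])
    exact_mod_cast this
  choose a b hab hform using fun i => root_struct (z i) (hsum0 i) (hsum2 i)
  -- inner product with r
  have hur : ∀ i, z i p - z i q = 1 := by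
    intro i
    have h := hinner i
    rw [hr] at h
    have hd : u i ⬝ᵥ (e p - e q) = u i p - u i q := by
      simp [dotProduct, e, mul_sub, mul_ite, Finset.sum_sub_distrib]
    rw [hd, hzu i p, hzu i q] at h
    exact_mod_cast h
  -- case analysis
  have hcases : ∀ i, (a i = p ∧ b i ≠ p ∧ b i ≠ q) ∨ (b i = q ∧ a i ≠ p ∧ a i ≠ q) := by
    intro i
    have e1 := hform i p
    have e2 := hform i q
    have key := hur i
    rw [e1, e2] at key
    rcases eq_or_ne (a i) p with h1 | h1
    · have c2 : ¬ p = b i := fun h => hab i (h1.trans h)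
      have c3 : ¬ q = a i := fun h => hpq (h1.symm.trans h.symm)
      rw [if_pos h1.symm, if_neg c2, if_neg c3] at key
      by_cases c4 : q = b i
      · rw [if_pos c4] at key; omega
      · exact Or.inl ⟨h1, fun h => c2 h.symm, fun h => c4 h.symm⟩
    · have c1 : ¬ p = a i := fun h => h1 h.symm
      rw [if_neg c1] at key
      by_cases c4 : q = b i
      · have c2 : ¬ p = b i := fun h => hpq (h.trans c4.symm)
        rw [if_neg c2, if_pos c4] at key
        by_cases c3 : q = a i
        · exact absurd (c3.symm.trans c4) (hab i)
        · exact Or.inr ⟨c4.symm, h1, fun h => c3 h.symm⟩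
      · exfalso
        rw [if_neg c4] at key
        by_cases c2 : p = b i <;> by_cases c3 : q = a i <;>
          [rw [if_pos c2, if_pos c3] at key; rw [if_pos c2, if_neg c3] at key;
           rw [if_neg c2, if_pos c3] at key; rw [if_neg c2, if_neg c3] at key] <;>
          omega
  -- the class map
  set c : Fin n → Fin (m+1) := fun i => if a i = p then b i else a i with hc
  have hclt : ∀ i, (c i).val < m - 1 := by
    intro i
    rcases hcases i with ⟨h1, h2, h3⟩ | ⟨h1, h2, h3⟩
    · have : c i = b i := by simp [hc, h1]
      rw [this]
      have := (b i).isLt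
      simp [hp, hq, Fin.ext_iff] at h2 h3
      omega
    · have : c i = a i := by simp [hc, h2]
      rw [this]
      have := (a i).isLt
      simp [hp, hq, Fin.ext_iff] at h2 h3
      omega
  have hcp : ∀ i, c i ≠ p := by
    intro i h
    have h2 := hclt i
    rw [h, hp] at h2
    exact absurd h2 (by simp only [Fin.val_mk]; omega)
  have hcq : ∀ i, c i ≠ q := by
    intro i h
    have h2 := hclt i
    rw [h, hq] at h2
    exact absurd h2 (by simp only [Fin.val_mk]; omega)
  -- structural form of u i
  have huform : ∀ i, u i = e p - e (c i) ∨ u i = e (c i) - e q := by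
    intro i
    rcases hcases i with ⟨h1, h2, h3⟩ | ⟨h1, h2, h3⟩
    · left
      have hci : c i = b i := by simp [hc, h1]
      funext k
      rw [hzu i k, hform i k]
      push_cast
      simp [e, h1, hci]
    · right
      have hci : c i = a i := by simp [hc, h2]
      funext k
      rw [hzu i k, hform i k]
      push_cast
      simp [e, h1, hci]
  -- r - (e p - e c) = e c - e q
  have hflip : ∀ x : Fin (m+1), r - (e p - e x) = e x - e q := by
    intro x
    rw [hr]
    abel
  -- injective
  set f : Fin n → Fin (m-1) := fun i => ⟨(c i).val, hclt i⟩ with hf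
  have hinj : Function.Injective f := by
    intro i j hij
    by_contra hne
    have hcij : c i = c j := by
      have h := congrArg Fin.val hij
      exact Fin.ext h
    obtain ⟨hne1, hne2⟩ := hineq i j hne
    rcases huform i with hi | hi <;> rcases huform j with hj | hj
    · exact hne1 (by rw [hi, hj, hcij])
    · apply hne2
      rw [hi, hj, hcij, ← hflip (c j)]
      abel
    · apply hne2
      rw [hi, hj, hcij, hflip (c j)]
    · exact hne1 (by rw [hi, hj, hcij])
  -- surjective
  have hsurj : Function.Surjective f := by
    intro t
    by_contra hns
    push_neg at hns
    set cc : Fin (m+1) := ⟨t.val, by omega⟩ with hcc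
    have hccp : cc ≠ p := by simp [hcc, hp, Fin.ext_iff]; omega
    have hccq : cc ≠ q := by
      have := t.isLt
      simp [hcc, hq, Fin.ext_iff]; omega
    have hccc : ∀ i, cc ≠ c i := by
      intro i h
      apply hns i
      apply Fin.ext
      simp [hf, ← h, hcc]
    -- the vector e cc - e q is in Alat m
    have hv : (e cc - e q) ∈ Alat m := by
      constructor
      · intro k
        refine ⟨(if k = cc then 1 else 0) - (if k = q then 1 else 0), ?_⟩
        push_cast
        simp [e]
      · have h : ∑ k, (e cc - e q) k = ∑ k, (e cc k - e q k) := rfl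
        rw [h, Finset.sum_sub_distrib]
        simp [e]
    rw [← hspan] at hv
    -- evaluation at cc kills all generators
    set φ : (Fin (m+1) → ℝ) →ₗ[ℤ] ℝ :=
      (LinearMap.proj cc : (Fin (m+1) → ℝ) →ₗ[ℝ] ℝ).restrictScalars ℤ with hφ
    have hgen : insert r (Set.range u) ⊆ (LinearMap.ker φ : Set (Fin (m+1) → ℝ)) := by
      intro v hvm
      rcases Set.mem_insert_iff.mp hvm with h | ⟨i, h⟩
      · apply LinearMap.mem_ker.mpr
        show v cc = 0
        rw [h, hr]
        show e p cc - e q cc = 0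
        simp [e, hccp, hccq]
      · apply LinearMap.mem_ker.mpr
        show v cc = 0
        rw [← h]
        rcases huform i with hh | hh <;> rw [hh] <;>
          show e _ cc - e _ cc = 0 <;>
          simp [e, hccp, hccq, hccc i]
    have := Submodule.span_le.mpr hgen hv
    have hv0 : (e cc - e q) cc = 0 := this
    simp [e, hccq, Ne.symm] at hv0
  have : Fintype.card (Fin n) = Fintype.card (Fin (m-1)) :=
    Fintype.card_of_bijective ⟨hinj, hsurj⟩
  simpa using this
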